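/- For each positive integer n, a₁(0,(2n+2)ε,m,ε) = (mε/√(1+m²ε²)) · Pₙ((1−m²ε²)/(1+m²ε²)), where Pₙ is the n-th Legendre polynomial Pₙ(x) = (1/(2ⁿ n!)) dⁿ/dxⁿ (x²−1)ⁿ. -/

import Mathlib

open scoped BigOperators

/-- The final x-coordinate of a checker path from `(0,0)` encoded by its sequence of moves
(`true` = move `(1,1)`, `false` = move `(-1,1)`). -/
def moveEndpoint {n : ℕ} (d : Fin n → Bool) : ℤ :=
  ∑ k, (if d k then (1 : ℤ) else -1)

/-- The number of turns of a checker path encoded by its sequence of moves. -/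
def nturns {n : ℕ} (d : Fin n → Bool) : ℕ :=
  ((List.ofFn d).zip (List.ofFn d).tail).countP fun p => p.1 != p.2

/-- Checker paths from `(0,0)` to `(x,t)` whose first step is to `(1,1)`,
encoded by their sequences of moves. -/
def cpaths (x t : ℤ) : Finset (Fin t.toNat → Bool) :=
  Finset.univ.filter fun d => moveEndpoint d = x ∧ (List.ofFn d).headI = true

/-- Feynman checkers amplitude with mass: `a(x·ε, t·ε, m, ε)` written in lattice
coordinates, i.e. `am m ε x t = (1+m²ε²)^((1-t)/2) * i * ∑ₛ (-i·m·ε)^turns(s)`. -/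
noncomputable def am (m ε : ℝ) (x t : ℤ) : ℂ :=
  (Real.sqrt (1 + m ^ 2 * ε ^ 2) : ℂ) ^ (1 - t) * Complex.I *
    ∑ d ∈ cpaths x t, (-Complex.I * (m * ε)) ^ nturns d

/-- The `n`-th Legendre polynomial `Pₙ(x) = (1/(2ⁿ n!)) dⁿ/dxⁿ (x²−1)ⁿ`. -/
noncomputable def legendre (n : ℕ) : Polynomial ℝ :=
  Polynomial.C (1 / (2 ^ n * n.factorial : ℝ)) *
    (fun p : Polynomial ℝ => Polynomial.derivative p)^[n] ((Polynomial.X ^ 2 - 1) ^ n)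

/-!
Group the paths by their last move. A path with `n + 1` up-moves and `n + 1` down-moves that starts
up and ends down has `2k + 1` turns exactly when its up-moves and its down-moves each form `k + 1`
runs, which happens for `C(n,k)²` paths; one that ends up has an even number of turns. With the
weight `(-imε)^turns`, multiplication by `i` makes the odd-turn paths real and the even-turn ones
imaginary, so `a₁ = (1+m²ε²)^(-(2n+1)/2) · mε · ∑ₖ C(n,k)² (-m²ε²)^k`. Rodrigues' formula together
with Leibniz' rule gives `Pₙ(x) = ∑ₖ C(n,k)² ((x-1)/2)^k ((x+1)/2)^(n-k)`, which at
`x = (1-m²ε²)/(1+m²ε²)` is the same sum divided by `(1+m²ε²)^n`.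

Instead of a bijection, the run counts come from Pascal-type recursions: appending one move relates
the weighted sums over paths with prescribed numbers of moves and last move, and the binomial
closed forms satisfy the same recursions.
-/

open Finset Polynomial

def turnCount : List Bool → ℕ
  | a :: b :: l => (if a == b then 0 else 1) + turnCount (b :: l)
  | _ => 0

lemma countP_zip_tail_eq_turnCount (l : List Bool) :
    (l.zip l.tail).countP (fun p => p.1 != p.2) = turnCount l := by
  match l with
  | [] => rfl
  | [_] => rfl
  | a :: b :: l =>
    have ih := countP_zip_tail_eq_turnCount (b :: l)
    simp only [List.tail_cons, List.zip_cons_cons, List.countP_cons] at ih ⊢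
    rw [ih]
    cases a <;> cases b <;> simp [turnCount] <;> omega

lemma nturns_eq_turnCount {N : ℕ} (d : Fin N → Bool) : nturns d = turnCount (List.ofFn d) :=
  countP_zip_tail_eq_turnCount _

lemma turnCount_append_pair (l : List Bool) (a b : Bool) :
    turnCount (l ++ [a, b]) = turnCount (l ++ [a]) + (if a == b then 0 else 1) := by
  induction l with
  | nil => cases a <;> cases b <;> simp [turnCount]
  | cons x l ih =>
    cases l with
    | nil => cases x <;> cases a <;> cases b <;> simp [turnCount]
    | cons y l =>
      simp only [List.cons_append, turnCount] at ih ⊢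
      omega

lemma turnCount_ofFn_snoc {N : ℕ} (e : Fin (N + 1) → Bool) (b : Bool) :
    turnCount (List.ofFn (Fin.snoc e b : Fin (N + 2) → Bool)) =
      turnCount (List.ofFn e) + (if e (Fin.last N) == b then 0 else 1) := by
  have hinit : (fun i : Fin (N + 1) => (Fin.snoc e b : Fin (N + 2) → Bool) i.castSucc) = e :=
    funext fun i => Fin.snoc_castSucc ..
  rw [List.ofFn_succ', hinit, Fin.snoc_last, List.ofFn_succ' e]
  simpa using turnCount_append_pair (List.ofFn fun i => e i.castSucc) (e (Fin.last N)) b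

lemma headI_ofFn {N : ℕ} (d : Fin (N + 1) → Bool) : (List.ofFn d).headI = d 0 := by
  rw [List.ofFn_succ]
  rfl

def numTrue {N : ℕ} (d : Fin N → Bool) : ℕ := ∑ k, if d k then 1 else 0

lemma numTrue_le {N : ℕ} (d : Fin N → Bool) : numTrue d ≤ N :=
  (Finset.sum_le_card_nsmul _ _ 1 fun k _ => by split <;> omega).trans_eq (by simp)

lemma numTrue_pos {N : ℕ} {d : Fin (N + 1) → Bool} (h : d 0 = true) : 0 < numTrue d :=
  Finset.sum_pos' (fun _ _ => Nat.zero_le _) ⟨0, Finset.mem_univ _, by simp [h]⟩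

lemma numTrue_snoc {N : ℕ} (e : Fin N → Bool) (b : Bool) :
    numTrue (Fin.snoc e b : Fin (N + 1) → Bool) = numTrue e + if b then 1 else 0 := by
  simp only [numTrue, Fin.sum_univ_castSucc, Fin.snoc_castSucc, Fin.snoc_last]

lemma moveEndpoint_eq {N : ℕ} (d : Fin N → Bool) : moveEndpoint d = 2 * (numTrue d : ℤ) - N := by
  have h (b : Bool) : (if b then (1 : ℤ) else -1) = 2 * (if b then 1 else 0) - 1 := by
    cases b <;> rfl
  simp only [moveEndpoint, numTrue, h, Finset.sum_sub_distrib, ← Finset.mul_sum]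
  push_cast
  simp

section TurnSum

variable {R : Type*} [CommSemiring R]

def turnSum (z : R) (N p : ℕ) (b : Bool) : R :=
  ∑ d : Fin (N + 1) → Bool,
    if d 0 = true ∧ d (Fin.last N) = b ∧ numTrue d = p then z ^ turnCount (List.ofFn d) else 0

lemma turnSum_zero_right (z : R) (N : ℕ) (b : Bool) : turnSum z N 0 b = 0 :=
  Finset.sum_eq_zero fun _ _ => if_neg fun h => (numTrue_pos h.1).ne' h.2.2

lemma turnSum_of_lt (z : R) {N p : ℕ} (b : Bool) (hp : N + 1 < p) : turnSum z N p b = 0 :=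
  Finset.sum_eq_zero fun d _ => if_neg fun h => by have := numTrue_le d; omega

lemma turnSum_zero_one (z : R) (b : Bool) : turnSum z 0 1 b = if b then 1 else 0 := by
  rw [turnSum, ← (Equiv.funUnique (Fin 1) Bool).symm.sum_comp, Fintype.sum_bool]
  cases b <;> simp [Equiv.funUnique, numTrue, turnCount]

lemma turnSum_succ (z : R) (N p : ℕ) (b : Bool) :
    turnSum z (N + 1) p b =
      ∑ e : Fin (N + 1) → Bool, ∑ c : Bool,
        if e 0 = true ∧ c = b ∧ numTrue e + (if c then 1 else 0) = p
          then z ^ (turnCount (List.ofFn e) + if e (Fin.last N) == c then 0 else 1) else 0 := by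
  rw [turnSum, ← (Fin.snocEquiv fun _ => Bool).sum_comp, Fintype.sum_prod_type, Finset.sum_comm]
  refine Finset.sum_congr rfl fun e _ => Finset.sum_congr rfl fun c _ => ?_
  have h0 : (Fin.snoc e c : Fin (N + 2) → Bool) 0 = e 0 := Fin.snoc_castSucc (i := 0) ..
  rw [show (Fin.snocEquiv fun _ => Bool) (c, e) = Fin.snoc e c from rfl]
  simp only [h0, Fin.snoc_last, numTrue_snoc, turnCount_ofFn_snoc]

lemma turnSum_succ_succ_true (z : R) (N p : ℕ) :
    turnSum z (N + 1) (p + 1) true = turnSum z N p true + z * turnSum z N p false := by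
  rw [turnSum_succ, turnSum, turnSum, Finset.mul_sum, ← Finset.sum_add_distrib]
  refine Finset.sum_congr rfl fun e _ => ?_
  rw [Fintype.sum_bool]
  cases e 0 <;> cases e (Fin.last N) <;> by_cases hp : numTrue e = p <;>
    simp [hp, pow_succ, mul_comm]

lemma turnSum_succ_false (z : R) (N p : ℕ) :
    turnSum z (N + 1) p false = z * turnSum z N p true + turnSum z N p false := by
  rw [turnSum_succ, turnSum, turnSum, Finset.mul_sum, ← Finset.sum_add_distrib]
  refine Finset.sum_congr rfl fun e _ => ?_
  rw [Fintype.sum_bool]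
  cases e 0 <;> cases e (Fin.last N) <;> by_cases hp : numTrue e = p <;>
    simp [hp, pow_succ, mul_comm]

/- A sequence starting with `true`, with `p + 1` moves `true` and `q > 0` moves `false`, ending
with `true` and having `2i + 2` turns splits into `i + 2` runs of `true`s and `i + 1` runs of
`false`s: `C(p, i+1) · C(q-1, i)` of them. Ending with `false` and having `2k + 1` turns means
`k + 1` runs of each: `C(p, k) · C(q-1, k)` of them. The weights are written in `y = z²`. -/
def evenTurnWeight (p q : ℕ) (y : R) : R :=
  if q = 0 then 1 else ∑ i ∈ range q, (p.choose (i + 1) * (q - 1).choose i : R) * y ^ (i + 1)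

def oddTurnWeight (p q : ℕ) (y : R) : R :=
  ∑ k ∈ range q, (p.choose k * (q - 1).choose k : R) * y ^ k

lemma evenTurnWeight_succ_left (p q : ℕ) (y : R) :
    evenTurnWeight (p + 1) q y = evenTurnWeight p q y + y * oddTurnWeight p q y := by
  rcases q with _ | q
  · simp [evenTurnWeight, oddTurnWeight]
  · simp only [evenTurnWeight, oddTurnWeight, if_neg q.succ_ne_zero, Finset.mul_sum,
      ← Finset.sum_add_distrib, Nat.choose_succ_succ p, Nat.cast_add]
    exact Finset.sum_congr rfl fun i _ => by ring

lemma oddTurnWeight_succ_right (p q : ℕ) (y : R) :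
    oddTurnWeight p (q + 1) y = evenTurnWeight p q y + oddTurnWeight p q y := by
  rcases q with _ | q
  · simp [evenTurnWeight, oddTurnWeight]
  · have hshift (r : ℕ) : ∑ k ∈ range (q + 2), (p.choose k * r.choose k : R) * y ^ k =
        1 + ∑ k ∈ range (q + 1), (p.choose (k + 1) * r.choose (k + 1) : R) * y ^ (k + 1) := by
      rw [Finset.sum_range_succ']
      simp [add_comm]
    have htop : ∑ k ∈ range (q + 1), (p.choose k * q.choose k : R) * y ^ k =
        ∑ k ∈ range (q + 2), (p.choose k * q.choose k : R) * y ^ k := by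
      rw [Finset.sum_range_succ _ (q + 1)]
      simp
    simp only [oddTurnWeight, evenTurnWeight, if_neg q.succ_ne_zero, Nat.add_sub_cancel]
    rw [htop, hshift, hshift]
    simp only [Nat.choose_succ_succ', Nat.cast_add, add_mul, mul_add, Finset.sum_add_distrib]
    ring

theorem turnSum_eq_weights (z : R) : ∀ p q : ℕ,
    turnSum z (p + q) (p + 1) true = evenTurnWeight p q (z ^ 2) ∧
      turnSum z (p + q) (p + 1) false = z * oddTurnWeight p q (z ^ 2)
  | 0, 0 => by simp [turnSum_zero_one, evenTurnWeight, oddTurnWeight]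
  | p + 1, 0 => by
    refine ⟨?_, ?_⟩
    · obtain ⟨ht, hf⟩ := Nat.add_zero p ▸ turnSum_eq_weights z p 0
      rw [Nat.add_zero, turnSum_succ_succ_true, ht, hf, evenTurnWeight_succ_left]
      ring
    · rw [Nat.add_zero, turnSum_succ_false, turnSum_of_lt _ _ (by omega),
        turnSum_of_lt _ _ (by omega)]
      simp [oddTurnWeight]
  | 0, q + 1 => by
    refine ⟨?_, ?_⟩
    · rw [Nat.zero_add, turnSum_succ_succ_true, turnSum_zero_right, turnSum_zero_right]
      simp [evenTurnWeight]
    · obtain ⟨ht, hf⟩ := Nat.zero_add q ▸ turnSum_eq_weights z 0 q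
      rw [Nat.zero_add, turnSum_succ_false, ht, hf, oddTurnWeight_succ_right]
      ring
  | p + 1, q + 1 => by
    obtain ⟨ht, hf⟩ := turnSum_eq_weights z p (q + 1)
    obtain ⟨ht', hf'⟩ := turnSum_eq_weights z (p + 1) q
    refine ⟨?_, ?_⟩
    · rw [show p + 1 + (q + 1) = p + (q + 1) + 1 by omega, turnSum_succ_succ_true, ht, hf,
        evenTurnWeight_succ_left]
      ring
    · rw [← add_assoc, turnSum_succ_false, ht', hf', oddTurnWeight_succ_right]
      ring

lemma map_evenTurnWeight {S : Type*} [CommSemiring S] (f : R →+* S)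
    (p q : ℕ) (y : R) : f (evenTurnWeight p q y) = evenTurnWeight p q (f y) := by
  unfold evenTurnWeight
  split_ifs <;> simp

lemma map_oddTurnWeight {S : Type*} [CommSemiring S] (f : R →+* S)
    (p q : ℕ) (y : R) : f (oddTurnWeight p q y) = oddTurnWeight p q (f y) := by
  simp [oddTurnWeight]

lemma oddTurnWeight_self_succ (n : ℕ) (y : R) :
    oddTurnWeight n (n + 1) y = ∑ k ∈ range (n + 1), (n.choose k : R) ^ 2 * y ^ k := by
  simp [oddTurnWeight, sq]

lemma sum_cpaths_eq_turnSum (z : R) {x : ℤ} {N p : ℕ}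
    (hx : x = 2 * p - (N + 1)) :
    ∑ d ∈ cpaths x (N + 1 : ℕ), z ^ nturns d = turnSum z N p true + turnSum z N p false := by
  rw [cpaths, Finset.sum_filter, turnSum, turnSum, ← Finset.sum_add_distrib]
  refine Finset.sum_congr rfl fun (d : Fin (N + 1) → Bool) _ => ?_
  have hend : moveEndpoint d = x ↔ numTrue d = p := by
    rw [moveEndpoint_eq, hx]
    omega
  rw [headI_ofFn, nturns_eq_turnCount]
  cases d (Fin.last N) <;> simp [hend, and_comm]

end TurnSum

lemma legendre_eval_eq_sum (n : ℕ) (x : ℝ) :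
    (legendre n).eval x =
      ∑ k ∈ range (n + 1), (n.choose k : ℝ) ^ 2 * ((x - 1) / 2) ^ k * ((x + 1) / 2) ^ (n - k) := by
  have hsplit : ((X : ℝ[X]) ^ 2 - 1) ^ n = (X - C 1) ^ n * (X + C 1) ^ n := by
    rw [← mul_pow]
    congr 1
    simp only [map_one]
    ring
  rw [legendre, hsplit, iterate_derivative_mul, eval_mul, eval_C, eval_finsetSum, Finset.mul_sum]
  refine Finset.sum_congr rfl fun k hk => ?_
  have hkn : k ≤ n := Nat.lt_succ_iff.mp (Finset.mem_range.mp hk)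
  rw [iterate_derivative_X_sub_pow, iterate_derivative_X_add_pow, Nat.sub_sub_self hkn,
    smul_mul_assoc, smul_smul]
  simp only [eval_mul, eval_pow, eval_sub, eval_add, eval_X, eval_C, nsmul_eq_mul, eval_natCast,
    Nat.cast_mul]
  have hfact : (n.choose k : ℝ) * (n.descFactorial (n - k)) * (n.descFactorial k)
      = (n.choose k : ℝ) ^ 2 * n.factorial := by
    rw [Nat.descFactorial_eq_factorial_mul_choose, Nat.descFactorial_eq_factorial_mul_choose,
      Nat.choose_symm hkn]
    have hc : (n.choose k : ℝ) * k.factorial * (n - k).factorial = n.factorial := by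
      exact_mod_cast Nat.choose_mul_factorial_mul_factorial hkn
    push_cast
    linear_combination (n.choose k : ℝ) ^ 2 * hc
  rw [show (2 : ℝ) ^ n = 2 ^ k * 2 ^ (n - k) by rw [← pow_add, Nat.add_sub_cancel' hkn], div_pow,
    div_pow]
  field_simp
  linear_combination ((x - 1) ^ k * (x + 1) ^ (n - k)) * hfact

lemma legendre_eval_mul_pow (n : ℕ) (w : ℝ) :
    (legendre n).eval ((1 - w ^ 2) / (1 + w ^ 2)) * (1 + w ^ 2) ^ n =
      ∑ k ∈ range (n + 1), (n.choose k : ℝ) ^ 2 * (-w ^ 2) ^ k := by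
  have hpos : 0 < 1 + w ^ 2 := by positivity
  rw [legendre_eval_eq_sum, Finset.sum_mul]
  refine Finset.sum_congr rfl fun k hk => ?_
  have hkn : k ≤ n := Nat.lt_succ_iff.mp (Finset.mem_range.mp hk)
  have hminus : ((1 - w ^ 2) / (1 + w ^ 2) - 1) / 2 = -w ^ 2 / (1 + w ^ 2) := by
    field_simp
    ring
  have hplus : ((1 - w ^ 2) / (1 + w ^ 2) + 1) / 2 = 1 / (1 + w ^ 2) := by
    field_simp
    ring
  rw [hminus, hplus, div_pow, div_pow, one_pow, ← Nat.sub_add_cancel hkn, pow_add _ (n - k)]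
  field_simp
  rw [Nat.sub_add_cancel hkn]

theorem a1_eq_legendre_general (m ε : ℝ) (n : ℕ) :
    (am m ε 0 (2 * n + 2)).re =
      m * ε / Real.sqrt (1 + m ^ 2 * ε ^ 2) *
        (legendre n).eval ((1 - m ^ 2 * ε ^ 2) / (1 + m ^ 2 * ε ^ 2)) := by
  rw [am, ← mul_pow, ← Complex.ofReal_mul,
    show (2 * (n : ℤ) + 2) = ((n + (n + 1) + 1 : ℕ) : ℤ) by push_cast; ring,
    sum_cpaths_eq_turnSum _ (p := n + 1) (by push_cast; ring)]
  set w := m * ε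
  set r := Real.sqrt (1 + w ^ 2)
  set z : ℂ := -Complex.I * w
  have hr : r ^ 2 = 1 + w ^ 2 := Real.sq_sqrt (by positivity)
  have hz : z ^ 2 = ((-w ^ 2 : ℝ) : ℂ) := by
    push_cast
    linear_combination (w : ℂ) ^ 2 * Complex.I_sq
  have hpow : (r : ℂ) ^ (1 - ((n + (n + 1) + 1 : ℕ) : ℤ)) = ((r ^ (2 * n + 1))⁻¹ : ℝ) := by
    rw [show (1 : ℤ) - ((n + (n + 1) + 1 : ℕ) : ℤ) = -((2 * n + 1 : ℕ) : ℤ) by push_cast; ring,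
      zpow_neg, zpow_natCast]
    push_cast
    rfl
  have hE : evenTurnWeight n (n + 1) ((-w ^ 2 : ℝ) : ℂ) =
      ((evenTurnWeight n (n + 1) (-w ^ 2) : ℝ) : ℂ) :=
    (map_evenTurnWeight Complex.ofRealHom _ _ _).symm
  have hO : oddTurnWeight n (n + 1) ((-w ^ 2 : ℝ) : ℂ) =
      ((oddTurnWeight n (n + 1) (-w ^ 2) : ℝ) : ℂ) :=
    (map_oddTurnWeight Complex.ofRealHom _ _ _).symm
  have hre (c E O : ℝ) : ((c : ℂ) * Complex.I * (E + z * O)).re = c * w * O := by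
    simp [z, mul_assoc]
  obtain ⟨htrue, hfalse⟩ := turnSum_eq_weights z n (n + 1)
  rw [htrue, hfalse, hpow, hz, hE, hO, hre, oddTurnWeight_self_succ, ← legendre_eval_mul_pow,
    pow_succ, pow_mul, hr]
  field_simp

/-- `a₁(0,(2n+2)ε,m,ε) = (mε/√(1+m²ε²)) · Pₙ((1−m²ε²)/(1+m²ε²))`. -/
theorem a1_eq_legendre (m ε : ℝ) (hε : 0 < ε) (hm : 0 ≤ m) (n : ℕ) (hn : 0 < n) :
    (am m ε 0 (2 * n + 2)).re =
      m * ε / Real.sqrt (1 + m ^ 2 * ε ^ 2) *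
        (legendre n).eval ((1 - m ^ 2 * ε ^ 2) / (1 + m ^ 2 * ε ^ 2)) :=
  a1_eq_legendre_general m ε n
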